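/- arXiv:1107.2194 — 6 statements merged into one kernel-verified Lean document; each statement's English description precedes it below -/
import Mathlib

section
/- Let ξ ∈ H^{-1/2}(S) and let q ∈ H^1(Ω) be the weak solution of −Δq = 0 in Ω, ∂_n q = ξ on S, q = 0 on B. Then the Hilbert-space adjoint N_0* : H^{-1/2}(S) → H^{-1/2}(B) of the linear operator N_0 satisfies N_0*(ξ) = ∂_n q|_B. -/
open scoped RealInnerProductSpace

/-!
Kozlov–Maz'ya iteration as Landweber iteration (D. Maxwell).

Abstract setting: `V` plays the role of `H^1(Ω)` with Dirichlet form `dir u v = ∫_Ω ∇u·∇v`;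
`TS, TB` are the trace spaces `H^{1/2}(S)`, `H^{1/2}(B)`; `NS, NB` are the Hilbert spaces
`H^{-1/2}(S)`, `H^{-1/2}(B)` equipped with the harmonic-extension inner products;
`trS, trB` are the boundary trace (restriction) maps and `dnS, dnB` the (weak) normal
derivative maps restricted to `S` and `B`; `Harm` is the subspace of (weakly) harmonic
functions.  The hypotheses `hGreenS, hGreenB` encode Green's identity
`∫_Ω ∇u·∇v = ⟨∂ₙu, v⟩_{∂Ω}` for harmonic `u`, and `hUniq₁, hUniq₂` the uniqueness of
solutions of the mixed boundary-value problems.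

STATEMENT 0: Let ξ ∈ H^{-1/2}(S) and let q ∈ H^1(Ω) be the weak solution of −Δq = 0 in Ω,
∂_n q = ξ on S, q = 0 on B.  Then the Hilbert-space adjoint N₀* : H^{-1/2}(S) → H^{-1/2}(B)
of N₀ satisfies N₀*(ξ) = ∂_n q|_B.
-/
theorem adjoint_N0_eq
    {V : Type*} [AddCommGroup V] [Module ℝ V]
    {TS TB : Type*} [AddCommGroup TS] [Module ℝ TS] [AddCommGroup TB] [Module ℝ TB]
    {NS NB : Type*} [NormedAddCommGroup NS] [InnerProductSpace ℝ NS] [CompleteSpace NS]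
    [NormedAddCommGroup NB] [InnerProductSpace ℝ NB] [CompleteSpace NB]
    (dir : V →ₗ[ℝ] V →ₗ[ℝ] ℝ)
    (hdir_symm : ∀ u v : V, dir u v = dir v u)
    (trS : V →ₗ[ℝ] TS) (trB : V →ₗ[ℝ] TB)
    (dnS : V →ₗ[ℝ] NS) (dnB : V →ₗ[ℝ] NB)
    (Harm : Submodule ℝ V)
    -- Green's identity for harmonic functions, split according to vanishing boundary data
    (hGreenS : ∀ u u' v : V, u ∈ Harm → u' ∈ Harm → dnS u = dnS u' → trB v = 0 →
      dir u v = dir u' v)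
    (hGreenB : ∀ u u' v : V, u ∈ Harm → u' ∈ Harm → dnB u = dnB u' → trS v = 0 →
      dir u v = dir u' v)
    -- uniqueness for the mixed boundary-value problems
    (hUniq₁ : ∀ u ∈ Harm, trS u = 0 → dnB u = 0 → u = 0)
    (hUniq₂ : ∀ u ∈ Harm, trB u = 0 → dnS u = 0 → u = 0)
    -- 𝒩₀ : ψ ↦ harmonic v with v = 0 on S and ∂ₙv = ψ on B; it realizes the inner
    -- product of H^{-1/2}(B)
    (calN0 : NB →ₗ[ℝ] V)
    (hcalN0 : ∀ ψ, calN0 ψ ∈ Harm ∧ trS (calN0 ψ) = 0 ∧ dnB (calN0 ψ) = ψ)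
    (hinnerB : ∀ ψ₁ ψ₂ : NB, ⟪ψ₁, ψ₂⟫ = dir (calN0 ψ₁) (calN0 ψ₂))
    -- ξ ↦ harmonic v with ∂ₙv = ξ on S and v = 0 on B; it realizes the inner
    -- product of H^{-1/2}(S)
    (ES : NS →ₗ[ℝ] V)
    (hES : ∀ ξ, ES ξ ∈ Harm ∧ dnS (ES ξ) = ξ ∧ trB (ES ξ) = 0)
    (hinnerS : ∀ ξ₁ ξ₂ : NS, ⟪ξ₁, ξ₂⟫ = dir (ES ξ₁) (ES ξ₂))
    -- the operator N₀(ψ) = ∂ₙ𝒩₀(ψ)|_S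
    (N0 : NB →L[ℝ] NS)
    (hN0 : ∀ ψ, N0 ψ = dnS (calN0 ψ)) :
    ∀ (ξ : NS) (q : V), q ∈ Harm → dnS q = ξ → trB q = 0 →
      ContinuousLinearMap.adjoint N0 ξ = dnB q := by
  intro ξ q hq hdnS htrB
  -- q = ES ξ by uniqueness
  have hESξ := hES ξ
  have hq_eq : q = ES ξ := by
    have h := hUniq₂ (q - ES ξ) (Submodule.sub_mem _ hq hESξ.1)
      (by simp [htrB, hESξ.2.2]) (by simp [hdnS, hESξ.2.1])
    have := sub_eq_zero.mp h
    exact this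
  apply ext_inner_right ℝ
  intro ψ
  rw [ContinuousLinearMap.adjoint_inner_left]
  rw [hinnerS, hinnerB]
  have h1 : dir (ES (N0 ψ)) (ES ξ) = dir (calN0 ψ) (ES ξ) := by
    apply hGreenS _ _ _ (hES (N0 ψ)).1 (hcalN0 ψ).1
    · rw [(hES (N0 ψ)).2.1, hN0]
    · exact (hES ξ).2.2
  have h2 : dir (calN0 (dnB q)) (calN0 ψ) = dir q (calN0 ψ) := by
    apply hGreenB _ _ _ (hcalN0 (dnB q)).1 hq
    · rw [(hcalN0 (dnB q)).2.2]
    · exact (hcalN0 ψ).2.1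
  rw [hdir_symm (ES ξ), h1, h2, hq_eq, hdir_symm]
end

section
/- For every ψ ∈ H^{-1/2}(B), N_0* N_0 (ψ) = ψ − KM_0(ψ), where N_0* is the Hilbert-space adjoint of N_0 with respect to the harmonic-extension inner products on H^{-1/2}(B) and H^{-1/2}(S). -/
open scoped RealInnerProductSpace

/-!
Kozlov–Maz'ya iteration as Landweber iteration (D. Maxwell).

Abstract setting: `V` plays the role of `H^1(Ω)` with Dirichlet form `dir u v = ∫_Ω ∇u·∇v`;
`TS, TB` are the trace spaces `H^{1/2}(S)`, `H^{1/2}(B)`; `NS, NB` are the Hilbert spaces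
`H^{-1/2}(S)`, `H^{-1/2}(B)` equipped with the harmonic-extension inner products;
`trS, trB` are the boundary trace (restriction) maps and `dnS, dnB` the (weak) normal
derivative maps restricted to `S` and `B`; `Harm` is the subspace of (weakly) harmonic
functions.  The hypotheses `hGreenS, hGreenB` encode Green's identity
`∫_Ω ∇u·∇v = ⟨∂ₙu, v⟩_{∂Ω}` for harmonic `u`, and `hUniq₁, hUniq₂` the uniqueness of
solutions of the mixed boundary-value problems.

STATEMENT 1: For every ψ ∈ H^{-1/2}(B), N₀* N₀ (ψ) = ψ − KM₀(ψ), where N₀* is the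
Hilbert-space adjoint of N₀ with respect to the harmonic-extension inner products, and
KM₀(ψ) = ∂ₙ 𝒟₀(𝒩₀(ψ)|_B)|_B with 𝒟₀(φ) the harmonic function with ∂ₙw = 0 on S, w = φ on B.
-/
theorem adjointN0_comp_N0_eq_id_sub_KM0
    {V : Type*} [AddCommGroup V] [Module ℝ V]
    {TS TB : Type*} [AddCommGroup TS] [Module ℝ TS] [AddCommGroup TB] [Module ℝ TB]
    {NS NB : Type*} [NormedAddCommGroup NS] [InnerProductSpace ℝ NS] [CompleteSpace NS]
    [NormedAddCommGroup NB] [InnerProductSpace ℝ NB] [CompleteSpace NB]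
    (dir : V →ₗ[ℝ] V →ₗ[ℝ] ℝ)
    (hdir_symm : ∀ u v : V, dir u v = dir v u)
    (trS : V →ₗ[ℝ] TS) (trB : V →ₗ[ℝ] TB)
    (dnS : V →ₗ[ℝ] NS) (dnB : V →ₗ[ℝ] NB)
    (Harm : Submodule ℝ V)
    -- Green's identity for harmonic functions, split according to vanishing boundary data
    (hGreenS : ∀ u u' v : V, u ∈ Harm → u' ∈ Harm → dnS u = dnS u' → trB v = 0 →
      dir u v = dir u' v)
    (hGreenB : ∀ u u' v : V, u ∈ Harm → u' ∈ Harm → dnB u = dnB u' → trS v = 0 →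
      dir u v = dir u' v)
    -- uniqueness for the mixed boundary-value problems
    (hUniq₁ : ∀ u ∈ Harm, trS u = 0 → dnB u = 0 → u = 0)
    (hUniq₂ : ∀ u ∈ Harm, trB u = 0 → dnS u = 0 → u = 0)
    -- 𝒩₀ : ψ ↦ harmonic v with v = 0 on S and ∂ₙv = ψ on B; it realizes the inner
    -- product of H^{-1/2}(B)
    (calN0 : NB →ₗ[ℝ] V)
    (hcalN0 : ∀ ψ, calN0 ψ ∈ Harm ∧ trS (calN0 ψ) = 0 ∧ dnB (calN0 ψ) = ψ)
    (hinnerB : ∀ ψ₁ ψ₂ : NB, ⟪ψ₁, ψ₂⟫ = dir (calN0 ψ₁) (calN0 ψ₂))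
    -- ξ ↦ harmonic v with ∂ₙv = ξ on S and v = 0 on B; it realizes the inner
    -- product of H^{-1/2}(S)
    (ES : NS →ₗ[ℝ] V)
    (hES : ∀ ξ, ES ξ ∈ Harm ∧ dnS (ES ξ) = ξ ∧ trB (ES ξ) = 0)
    (hinnerS : ∀ ξ₁ ξ₂ : NS, ⟪ξ₁, ξ₂⟫ = dir (ES ξ₁) (ES ξ₂))
    -- the operator N₀(ψ) = ∂ₙ𝒩₀(ψ)|_S
    (N0 : NB →L[ℝ] NS)
    (hN0 : ∀ ψ, N0 ψ = dnS (calN0 ψ))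
    -- 𝒟₀ : φ ↦ harmonic w with ∂ₙw = 0 on S and w = φ on B
    (calD0 : TB →ₗ[ℝ] V)
    (hcalD0 : ∀ φ, calD0 φ ∈ Harm ∧ dnS (calD0 φ) = 0 ∧ trB (calD0 φ) = φ)
    -- KM₀(ψ) = ∂ₙ 𝒟₀(𝒩₀(ψ)|_B)|_B
    (KM0 : NB → NB)
    (hKM0 : ∀ ψ, KM0 ψ = dnB (calD0 (trB (calN0 ψ)))) :
    ∀ ψ : NB, ContinuousLinearMap.adjoint N0 (N0 ψ) = ψ - KM0 ψ := by
  -- key identification: ES (N0 φ) = 𝒩₀ φ − 𝒟₀ (trB (𝒩₀ φ))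
  have hES_eq : ∀ φ : NB, ES (N0 φ) = calN0 φ - calD0 (trB (calN0 φ)) := by
    intro φ
    obtain ⟨haH, haS, haB⟩ := hES (N0 φ)
    obtain ⟨hbH, hbS, hbB⟩ := hcalN0 φ
    obtain ⟨hcH, hcS, hcB⟩ := hcalD0 (trB (calN0 φ))
    have hd : ES (N0 φ) - (calN0 φ - calD0 (trB (calN0 φ))) = 0 := by
      refine hUniq₂ _ ?_ ?_ ?_
      · exact Submodule.sub_mem _ haH (Submodule.sub_mem _ hbH hcH)
      · simp [map_sub, haB, hcB]
      · rw [map_sub, map_sub, haS, hcS, hN0, sub_zero, sub_self]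
    exact sub_eq_zero.mp hd
  intro ψ
  apply ext_inner_right ℝ
  intro χ
  obtain ⟨huH, huS, huB⟩ := hcalN0 ψ
  obtain ⟨hvH, hvS, hvB⟩ := hcalN0 χ
  obtain ⟨hwH, hwS, hwB⟩ := hcalD0 (trB (calN0 ψ))
  obtain ⟨hwχH, hwχS, hwχB⟩ := hcalD0 (trB (calN0 χ))
  obtain ⟨hmH, hmS, hmB⟩ := hcalN0 (ψ - KM0 ψ)
  set u := calN0 ψ
  set v := calN0 χ
  set w := calD0 (trB u)
  set wχ := calD0 (trB v)
  set m := calN0 (ψ - KM0 ψ)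
  have step1 : ⟪ContinuousLinearMap.adjoint N0 (N0 ψ), χ⟫ = dir (u - w) (v - wχ) := by
    rw [ContinuousLinearMap.adjoint_inner_left, hinnerS, hES_eq, hES_eq]
  -- dir (u - w) wχ = 0
  have step2 : dir (u - w) wχ = 0 := by
    have h0 : dir wχ (u - w) = dir (0 : V) (u - w) := by
      refine hGreenS wχ 0 (u - w) hwχH (Submodule.zero_mem _) ?_ ?_
      · simp [hwχS]
      · simp [map_sub, hwB]
    rw [hdir_symm, h0, map_zero]
    rfl
  -- dir (u - w) v = dir m v
  have step3 : dir (u - w) v = dir m v := by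
    refine hGreenB (u - w) m v (Submodule.sub_mem _ huH hwH) hmH ?_ hvS
    rw [map_sub, huB, hmB, hKM0]
  have step4 : dir m v = ⟪ψ - KM0 ψ, χ⟫ := (hinnerB _ _).symm
  calc ⟪ContinuousLinearMap.adjoint N0 (N0 ψ), χ⟫
      = dir (u - w) (v - wχ) := step1
    _ = dir (u - w) v - dir (u - w) wχ := map_sub _ _ _
    _ = dir m v := by rw [step2, step3, sub_zero]
    _ = ⟪ψ - KM0 ψ, χ⟫ := step4
end

section
/- N_0*(τ − N(0)) = KM(0), where N_0* is the Hilbert-space adjoint of N_0 with respect to the harmonic-extension inner products on H^{-1/2}(B) and H^{-1/2}(S). -/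
open scoped RealInnerProductSpace

/-!
Kozlov–Maz'ya iteration as Landweber iteration (D. Maxwell).

Abstract setting: `V` plays the role of `H^1(Ω)` with Dirichlet form `dir u v = ∫_Ω ∇u·∇v`;
`TS, TB` are the trace spaces `H^{1/2}(S)`, `H^{1/2}(B)`; `NS, NB` are the Hilbert spaces
`H^{-1/2}(S)`, `H^{-1/2}(B)` equipped with the harmonic-extension inner products;
`trS, trB` are the boundary trace (restriction) maps and `dnS, dnB` the (weak) normal
derivative maps restricted to `S` and `B`; `Harm` is the subspace of (weakly) harmonic
functions.  The hypotheses `hGreenS, hGreenB` encode Green's identity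
`∫_Ω ∇u·∇v = ⟨∂ₙu, v⟩_{∂Ω}` for harmonic `u`, and `hUniq₁, hUniq₂` the uniqueness of
solutions of the mixed boundary-value problems.

In addition, `SolF` is the set of weak solutions of `−Δu = f` for the fixed source
`f ∈ (H^1(Ω))*` (so differences of two members are harmonic), `σ ∈ H^{1/2}(S)` and
`τ ∈ H^{-1/2}(S)` are the fixed Cauchy data, `𝒩(ψ)` solves `−Δv = f, v|_S = σ, ∂ₙv|_B = ψ`,
`N(ψ) = ∂ₙ𝒩(ψ)|_S`, `𝒟(φ)` solves `−Δw = f, ∂ₙw|_S = τ, w|_B = φ`, and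
`KM(ψ) = ∂ₙ𝒟(𝒩(ψ)|_B)|_B`.

STATEMENT 2: N₀*(τ − N(0)) = KM(0).
-/
theorem adjointN0_of_residual_eq_KM_zero
    {V : Type*} [AddCommGroup V] [Module ℝ V]
    {TS TB : Type*} [AddCommGroup TS] [Module ℝ TS] [AddCommGroup TB] [Module ℝ TB]
    {NS NB : Type*} [NormedAddCommGroup NS] [InnerProductSpace ℝ NS] [CompleteSpace NS]
    [NormedAddCommGroup NB] [InnerProductSpace ℝ NB] [CompleteSpace NB]
    (dir : V →ₗ[ℝ] V →ₗ[ℝ] ℝ)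
    (hdir_symm : ∀ u v : V, dir u v = dir v u)
    (trS : V →ₗ[ℝ] TS) (trB : V →ₗ[ℝ] TB)
    (dnS : V →ₗ[ℝ] NS) (dnB : V →ₗ[ℝ] NB)
    (Harm : Submodule ℝ V)
    -- Green's identity for harmonic functions, split according to vanishing boundary data
    (hGreenS : ∀ u u' v : V, u ∈ Harm → u' ∈ Harm → dnS u = dnS u' → trB v = 0 →
      dir u v = dir u' v)
    (hGreenB : ∀ u u' v : V, u ∈ Harm → u' ∈ Harm → dnB u = dnB u' → trS v = 0 →
      dir u v = dir u' v)
    -- uniqueness for the mixed boundary-value problems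
    (hUniq₁ : ∀ u ∈ Harm, trS u = 0 → dnB u = 0 → u = 0)
    (hUniq₂ : ∀ u ∈ Harm, trB u = 0 → dnS u = 0 → u = 0)
    -- 𝒩₀ : ψ ↦ harmonic v with v = 0 on S and ∂ₙv = ψ on B; it realizes the inner
    -- product of H^{-1/2}(B)
    (calN0 : NB →ₗ[ℝ] V)
    (hcalN0 : ∀ ψ, calN0 ψ ∈ Harm ∧ trS (calN0 ψ) = 0 ∧ dnB (calN0 ψ) = ψ)
    (hinnerB : ∀ ψ₁ ψ₂ : NB, ⟪ψ₁, ψ₂⟫ = dir (calN0 ψ₁) (calN0 ψ₂))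
    -- ξ ↦ harmonic v with ∂ₙv = ξ on S and v = 0 on B; it realizes the inner
    -- product of H^{-1/2}(S)
    (ES : NS →ₗ[ℝ] V)
    (hES : ∀ ξ, ES ξ ∈ Harm ∧ dnS (ES ξ) = ξ ∧ trB (ES ξ) = 0)
    (hinnerS : ∀ ξ₁ ξ₂ : NS, ⟪ξ₁, ξ₂⟫ = dir (ES ξ₁) (ES ξ₂))
    -- the operator N₀(ψ) = ∂ₙ𝒩₀(ψ)|_S
    (N0 : NB →L[ℝ] NS)
    (hN0 : ∀ ψ, N0 ψ = dnS (calN0 ψ))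
    -- solutions of −Δu = f for the fixed right-hand side f
    (SolF : Set V)
    (hSolF_diff : ∀ u v : V, u ∈ SolF → v ∈ SolF → u - v ∈ Harm)
    -- the Cauchy data
    (σ : TS) (τ : NS)
    -- 𝒩 : ψ ↦ solution v of −Δv = f, v = σ on S, ∂ₙv = ψ on B
    (calN : NB → V)
    (hcalN : ∀ ψ, calN ψ ∈ SolF ∧ trS (calN ψ) = σ ∧ dnB (calN ψ) = ψ)
    (N : NB → NS)
    (hN : ∀ ψ, N ψ = dnS (calN ψ))
    -- 𝒟 : φ ↦ solution w of −Δw = f, ∂ₙw = τ on S, w = φ on B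
    (calD : TB → V)
    (hcalD : ∀ φ, calD φ ∈ SolF ∧ dnS (calD φ) = τ ∧ trB (calD φ) = φ)
    -- KM(ψ) = ∂ₙ 𝒟(𝒩(ψ)|_B)|_B
    (KM : NB → NB)
    (hKM : ∀ ψ, KM ψ = dnB (calD (trB (calN ψ)))) :
    ContinuousLinearMap.adjoint N0 (τ - N 0) = KM 0 := by
  have hv := hcalN 0
  have hw := hcalD (trB (calN 0))
  set v := calN 0 with hvdef
  set w := calD (trB v) with hwdef
  have hwv : w - v ∈ Harm := hSolF_diff _ _ hw.1 hv.1
  -- ES (τ - N 0) = w - v by uniqueness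
  have hE : ES (τ - N 0) = w - v := by
    have hz : ES (τ - N 0) - (w - v) = 0 := by
      apply hUniq₂
      · exact Submodule.sub_mem _ (hES _).1 hwv
      · rw [map_sub, (hES _).2.2, map_sub, hw.2.2, sub_self, sub_zero]
      · rw [map_sub, (hES _).2.1, map_sub, hw.2.1, hN]
        abel
    exact sub_eq_zero.mp hz
  have hdnB : dnB (ES (τ - N 0)) = KM 0 := by
    rw [hE, hKM, map_sub, hv.2.2, sub_zero]
  apply ext_inner_right ℝ
  intro ψ
  rw [ContinuousLinearMap.adjoint_inner_left]
  calc ⟪τ - N 0, N0 ψ⟫ = dir (ES (τ - N 0)) (ES (N0 ψ)) := hinnerS _ _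
    _ = dir (ES (N0 ψ)) (ES (τ - N 0)) := hdir_symm _ _
    _ = dir (calN0 ψ) (ES (τ - N 0)) :=
        hGreenS _ _ _ (hES _).1 (hcalN0 _).1
          (by rw [(hES _).2.1, hN0]) (hES _).2.2
    _ = dir (ES (τ - N 0)) (calN0 ψ) := hdir_symm _ _
    _ = dir (calN0 (KM 0)) (calN0 ψ) :=
        hGreenB _ _ _ (hES _).1 (hcalN0 _).1
          (by rw [hdnB, (hcalN0 _).2.2]) (hcalN0 _).2.1
    _ = ⟪KM 0, ψ⟫ := (hinnerB _ _).symm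
end

section
/- For every ψ ∈ H^{-1/2}(B), the Landweber step L_N(ψ) := ψ + N_0*(τ − N(0) − N_0(ψ)) equals KM(ψ). Consequently, the iterates ψ_{k+1} = L_N(ψ_k) produced by Landweber iteration with relaxation constant a = 1 applied to the operator equation N(ψ) = τ are identical to the Kozlov-Maz'ya iterates ψ_{k+1} = KM(ψ_k). -/
open scoped RealInnerProductSpace

/-!
Kozlov–Maz'ya iteration as Landweber iteration (D. Maxwell).

Abstract setting: `V` plays the role of `H^1(Ω)` with Dirichlet form `dir u v = ∫_Ω ∇u·∇v`;
`TS, TB` are the trace spaces `H^{1/2}(S)`, `H^{1/2}(B)`; `NS, NB` are the Hilbert spaces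
`H^{-1/2}(S)`, `H^{-1/2}(B)` equipped with the harmonic-extension inner products;
`trS, trB` are the boundary trace (restriction) maps and `dnS, dnB` the (weak) normal
derivative maps restricted to `S` and `B`; `Harm` is the subspace of (weakly) harmonic
functions.  The hypotheses `hGreenS, hGreenB` encode Green's identity
`∫_Ω ∇u·∇v = ⟨∂ₙu, v⟩_{∂Ω}` for harmonic `u`, and `hUniq₁, hUniq₂` the uniqueness of
solutions of the mixed boundary-value problems.

In addition, `SolF` is the set of weak solutions of `−Δu = f` for the fixed source
`f ∈ (H^1(Ω))*`, `σ ∈ H^{1/2}(S)` and `τ ∈ H^{-1/2}(S)` are the fixed Cauchy data,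
`𝒩(ψ)` solves `−Δv = f, v|_S = σ, ∂ₙv|_B = ψ`, `N(ψ) = ∂ₙ𝒩(ψ)|_S`, `𝒟(φ)` solves
`−Δw = f, ∂ₙw|_S = τ, w|_B = φ`, and `KM(ψ) = ∂ₙ𝒟(𝒩(ψ)|_B)|_B`.

STATEMENT 3: For every ψ ∈ H^{-1/2}(B), the Landweber step
L_N(ψ) := ψ + N₀*(τ − N(0) − N₀(ψ)) equals KM(ψ).  Consequently, the iterates
ψ_{k+1} = L_N(ψ_k) produced by Landweber iteration with relaxation constant a = 1 applied
to the operator equation N(ψ) = τ are identical to the Kozlov-Maz'ya iterates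
ψ_{k+1} = KM(ψ_k).
-/
theorem landweber_step_eq_KM
    {V : Type*} [AddCommGroup V] [Module ℝ V]
    {TS TB : Type*} [AddCommGroup TS] [Module ℝ TS] [AddCommGroup TB] [Module ℝ TB]
    {NS NB : Type*} [NormedAddCommGroup NS] [InnerProductSpace ℝ NS] [CompleteSpace NS]
    [NormedAddCommGroup NB] [InnerProductSpace ℝ NB] [CompleteSpace NB]
    (dir : V →ₗ[ℝ] V →ₗ[ℝ] ℝ)
    (hdir_symm : ∀ u v : V, dir u v = dir v u)
    (trS : V →ₗ[ℝ] TS) (trB : V →ₗ[ℝ] TB)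
    (dnS : V →ₗ[ℝ] NS) (dnB : V →ₗ[ℝ] NB)
    (Harm : Submodule ℝ V)
    -- Green's identity for harmonic functions, split according to vanishing boundary data
    (hGreenS : ∀ u u' v : V, u ∈ Harm → u' ∈ Harm → dnS u = dnS u' → trB v = 0 →
      dir u v = dir u' v)
    (hGreenB : ∀ u u' v : V, u ∈ Harm → u' ∈ Harm → dnB u = dnB u' → trS v = 0 →
      dir u v = dir u' v)
    -- uniqueness for the mixed boundary-value problems
    (hUniq₁ : ∀ u ∈ Harm, trS u = 0 → dnB u = 0 → u = 0)
    (hUniq₂ : ∀ u ∈ Harm, trB u = 0 → dnS u = 0 → u = 0)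
    -- 𝒩₀ : ψ ↦ harmonic v with v = 0 on S and ∂ₙv = ψ on B; it realizes the inner
    -- product of H^{-1/2}(B)
    (calN0 : NB →ₗ[ℝ] V)
    (hcalN0 : ∀ ψ, calN0 ψ ∈ Harm ∧ trS (calN0 ψ) = 0 ∧ dnB (calN0 ψ) = ψ)
    (hinnerB : ∀ ψ₁ ψ₂ : NB, ⟪ψ₁, ψ₂⟫ = dir (calN0 ψ₁) (calN0 ψ₂))
    -- ξ ↦ harmonic v with ∂ₙv = ξ on S and v = 0 on B; it realizes the inner
    -- product of H^{-1/2}(S)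
    (ES : NS →ₗ[ℝ] V)
    (hES : ∀ ξ, ES ξ ∈ Harm ∧ dnS (ES ξ) = ξ ∧ trB (ES ξ) = 0)
    (hinnerS : ∀ ξ₁ ξ₂ : NS, ⟪ξ₁, ξ₂⟫ = dir (ES ξ₁) (ES ξ₂))
    -- the operator N₀(ψ) = ∂ₙ𝒩₀(ψ)|_S
    (N0 : NB →L[ℝ] NS)
    (hN0 : ∀ ψ, N0 ψ = dnS (calN0 ψ))
    -- solutions of −Δu = f for the fixed right-hand side f
    (SolF : Set V)
    (hSolF_diff : ∀ u v : V, u ∈ SolF → v ∈ SolF → u - v ∈ Harm)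
    -- the Cauchy data
    (σ : TS) (τ : NS)
    -- 𝒩 : ψ ↦ solution v of −Δv = f, v = σ on S, ∂ₙv = ψ on B
    (calN : NB → V)
    (hcalN : ∀ ψ, calN ψ ∈ SolF ∧ trS (calN ψ) = σ ∧ dnB (calN ψ) = ψ)
    (N : NB → NS)
    (hN : ∀ ψ, N ψ = dnS (calN ψ))
    -- 𝒟 : φ ↦ solution w of −Δw = f, ∂ₙw = τ on S, w = φ on B
    (calD : TB → V)
    (hcalD : ∀ φ, calD φ ∈ SolF ∧ dnS (calD φ) = τ ∧ trB (calD φ) = φ)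
    -- KM(ψ) = ∂ₙ 𝒟(𝒩(ψ)|_B)|_B
    (KM : NB → NB)
    (hKM : ∀ ψ, KM ψ = dnB (calD (trB (calN ψ))))
    -- the Landweber step with relaxation constant a = 1
    (LN : NB → NB)
    (hLN : ∀ ψ, LN ψ = ψ + ContinuousLinearMap.adjoint N0 (τ - N 0 - N0 ψ)) :
    (∀ ψ : NB, LN ψ = KM ψ) ∧
      ∀ (ψ₀ : NB) (k : ℕ), LN^[k] ψ₀ = KM^[k] ψ₀ := by
  -- Step 1: decomposition calN ψ = calN 0 + calN0 ψ
  have hdecomp : ∀ ψ : NB, calN ψ = calN 0 + calN0 ψ := by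
    intro ψ
    have hmem : calN ψ - (calN 0 + calN0 ψ) ∈ Harm := by
      have h1 : calN ψ - calN 0 ∈ Harm := hSolF_diff _ _ (hcalN ψ).1 (hcalN 0).1
      have h2 : calN0 ψ ∈ Harm := (hcalN0 ψ).1
      have he : calN ψ - (calN 0 + calN0 ψ) = (calN ψ - calN 0) - calN0 ψ := by abel
      rw [he]; exact Submodule.sub_mem _ h1 h2
    have htr : trS (calN ψ - (calN 0 + calN0 ψ)) = 0 := by
      simp [map_sub, map_add, (hcalN ψ).2.1, (hcalN 0).2.1, (hcalN0 ψ).2.1]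
    have hdn : dnB (calN ψ - (calN 0 + calN0 ψ)) = 0 := by
      simp [map_sub, map_add, (hcalN ψ).2.2, (hcalN 0).2.2, (hcalN0 ψ).2.2]
    exact sub_eq_zero.mp (hUniq₁ _ hmem htr hdn)
  -- Step 2: N ψ = N 0 + N0 ψ
  have hNadd : ∀ ψ : NB, N ψ = N 0 + N0 ψ := by
    intro ψ
    rw [hN ψ, hdecomp ψ, map_add, ← hN 0, ← hN0 ψ]
  -- Step 3: the adjoint of N0 is ξ ↦ dnB (ES ξ)
  have hadj : ∀ ξ : NS, ContinuousLinearMap.adjoint N0 ξ = dnB (ES ξ) := by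
    intro ξ
    apply ext_inner_right ℝ
    intro ψ
    rw [ContinuousLinearMap.adjoint_inner_left]
    have e1 : (⟪dnB (ES ξ), ψ⟫ : ℝ) = dir (calN0 (dnB (ES ξ))) (calN0 ψ) := hinnerB _ _
    have e2 : dir (calN0 (dnB (ES ξ))) (calN0 ψ) = dir (ES ξ) (calN0 ψ) := by
      apply hGreenB _ _ _ (hcalN0 _).1 (hES ξ).1 _ (hcalN0 ψ).2.1
      rw [(hcalN0 _).2.2]
    have e3 : dir (calN0 ψ) (ES ξ) = dir (ES (N0 ψ)) (ES ξ) := by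
      apply hGreenS _ _ _ (hcalN0 ψ).1 (hES (N0 ψ)).1 _ (hES ξ).2.2
      rw [(hES (N0 ψ)).2.1, hN0 ψ]
    have e4 : (⟪ξ, N0 ψ⟫ : ℝ) = dir (ES ξ) (ES (N0 ψ)) := hinnerS _ _
    rw [e4, e1, e2, hdir_symm (ES ξ) (calN0 ψ), e3, hdir_symm]
  -- Step 4: KM ψ = ψ + dnB (ES (τ - N ψ))
  have hKMf : ∀ ψ : NB, KM ψ = ψ + dnB (ES (τ - N ψ)) := by
    intro ψ
    set u := calD (trB (calN ψ)) - calN ψ with hu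
    have hueq : u = ES (τ - N ψ) := by
      have hmem : u - ES (τ - N ψ) ∈ Harm := by
        have h1 : u ∈ Harm := hSolF_diff _ _ (hcalD _).1 (hcalN ψ).1
        exact Submodule.sub_mem _ h1 (hES _).1
      have htr : trB (u - ES (τ - N ψ)) = 0 := by
        simp [hu, map_sub, (hcalD _).2.2, (hES _).2.2]
      have hdn : dnS (u - ES (τ - N ψ)) = 0 := by
        simp [hu, map_sub, (hcalD _).2.1, (hES _).2.1, hN ψ]
      exact sub_eq_zero.mp (hUniq₂ _ hmem htr hdn)
    have : calD (trB (calN ψ)) = u + calN ψ := by rw [hu]; abel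
    rw [hKM ψ, this, map_add, hueq, (hcalN ψ).2.2, add_comm]
  -- Main pointwise statement
  have hmain : ∀ ψ : NB, LN ψ = KM ψ := by
    intro ψ
    rw [hLN ψ, hKMf ψ, hadj]
    congr 2
    rw [hNadd ψ]
    abel
  refine ⟨hmain, ?_⟩
  intro ψ₀ k
  rw [funext hmain]
end

section
/- The linear operator KM_0 : H^{-1/2}(B) → H^{-1/2}(B) is self-adjoint with respect to the harmonic-extension inner product on H^{-1/2}(B). -/
open scoped RealInnerProductSpace

/-!
Kozlov–Maz'ya iteration as Landweber iteration (D. Maxwell).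

Abstract setting: `V` plays the role of `H^1(Ω)` with Dirichlet form `dir u v = ∫_Ω ∇u·∇v`;
`TS, TB` are the trace spaces `H^{1/2}(S)`, `H^{1/2}(B)`; `NS, NB` are the Hilbert spaces
`H^{-1/2}(S)`, `H^{-1/2}(B)` equipped with the harmonic-extension inner products;
`trS, trB` are the boundary trace (restriction) maps and `dnS, dnB` the (weak) normal
derivative maps restricted to `S` and `B`; `Harm` is the subspace of (weakly) harmonic
functions.  The hypotheses `hGreenS, hGreenB` encode Green's identity
`∫_Ω ∇u·∇v = ⟨∂ₙu, v⟩_{∂Ω}` for harmonic `u`, and `hUniq₁, hUniq₂` the uniqueness of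
solutions of the mixed boundary-value problems.

STATEMENT 4: The linear operator KM₀ : H^{-1/2}(B) → H^{-1/2}(B),
KM₀(ψ) = ∂ₙ 𝒟₀(𝒩₀(ψ)|_B)|_B, is self-adjoint with respect to the harmonic-extension
inner product on H^{-1/2}(B).
-/
theorem KM0_isSelfAdjoint
    {V : Type*} [AddCommGroup V] [Module ℝ V]
    {TS TB : Type*} [AddCommGroup TS] [Module ℝ TS] [AddCommGroup TB] [Module ℝ TB]
    {NS NB : Type*} [NormedAddCommGroup NS] [InnerProductSpace ℝ NS] [CompleteSpace NS]
    [NormedAddCommGroup NB] [InnerProductSpace ℝ NB] [CompleteSpace NB]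
    (dir : V →ₗ[ℝ] V →ₗ[ℝ] ℝ)
    (hdir_symm : ∀ u v : V, dir u v = dir v u)
    (trS : V →ₗ[ℝ] TS) (trB : V →ₗ[ℝ] TB)
    (dnS : V →ₗ[ℝ] NS) (dnB : V →ₗ[ℝ] NB)
    (Harm : Submodule ℝ V)
    -- Green's identity for harmonic functions, split according to vanishing boundary data
    (hGreenS : ∀ u u' v : V, u ∈ Harm → u' ∈ Harm → dnS u = dnS u' → trB v = 0 →
      dir u v = dir u' v)
    (hGreenB : ∀ u u' v : V, u ∈ Harm → u' ∈ Harm → dnB u = dnB u' → trS v = 0 →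
      dir u v = dir u' v)
    -- uniqueness for the mixed boundary-value problems
    (hUniq₁ : ∀ u ∈ Harm, trS u = 0 → dnB u = 0 → u = 0)
    (hUniq₂ : ∀ u ∈ Harm, trB u = 0 → dnS u = 0 → u = 0)
    -- 𝒩₀ : ψ ↦ harmonic v with v = 0 on S and ∂ₙv = ψ on B; it realizes the inner
    -- product of H^{-1/2}(B)
    (calN0 : NB →ₗ[ℝ] V)
    (hcalN0 : ∀ ψ, calN0 ψ ∈ Harm ∧ trS (calN0 ψ) = 0 ∧ dnB (calN0 ψ) = ψ)
    (hinnerB : ∀ ψ₁ ψ₂ : NB, ⟪ψ₁, ψ₂⟫ = dir (calN0 ψ₁) (calN0 ψ₂))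
    -- ξ ↦ harmonic v with ∂ₙv = ξ on S and v = 0 on B; it realizes the inner
    -- product of H^{-1/2}(S)
    (ES : NS →ₗ[ℝ] V)
    (hES : ∀ ξ, ES ξ ∈ Harm ∧ dnS (ES ξ) = ξ ∧ trB (ES ξ) = 0)
    (hinnerS : ∀ ξ₁ ξ₂ : NS, ⟪ξ₁, ξ₂⟫ = dir (ES ξ₁) (ES ξ₂))
    -- the operator N₀(ψ) = ∂ₙ𝒩₀(ψ)|_S
    (N0 : NB →L[ℝ] NS)
    (hN0 : ∀ ψ, N0 ψ = dnS (calN0 ψ))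
    -- 𝒟₀ : φ ↦ harmonic w with ∂ₙw = 0 on S and w = φ on B
    (calD0 : TB →ₗ[ℝ] V)
    (hcalD0 : ∀ φ, calD0 φ ∈ Harm ∧ dnS (calD0 φ) = 0 ∧ trB (calD0 φ) = φ)
    -- KM₀(ψ) = ∂ₙ 𝒟₀(𝒩₀(ψ)|_B)|_B, as a continuous linear operator
    (KM0 : NB →L[ℝ] NB)
    (hKM0 : ∀ ψ, KM0 ψ = dnB (calD0 (trB (calN0 ψ)))) :
    ContinuousLinearMap.adjoint KM0 = KM0 := by
  have key : ∀ ψ₁ ψ₂ : NB,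
      ⟪KM0 ψ₁, ψ₂⟫ = dir (calD0 (trB (calN0 ψ₁))) (calD0 (trB (calN0 ψ₂))) := by
    intro ψ₁ ψ₂
    have h1 : ⟪KM0 ψ₁, ψ₂⟫ = dir (calN0 (KM0 ψ₁)) (calN0 ψ₂) := hinnerB _ _
    have h2 : dir (calN0 (KM0 ψ₁)) (calN0 ψ₂) =
        dir (calD0 (trB (calN0 ψ₁))) (calN0 ψ₂) := by
      apply hGreenB _ _ _ (hcalN0 _).1 (hcalD0 _).1 _ (hcalN0 ψ₂).2.1
      rw [(hcalN0 _).2.2, hKM0]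
    have h3 : dir (calD0 (trB (calN0 ψ₁))) (calN0 ψ₂) =
        dir (calD0 (trB (calN0 ψ₁))) (calD0 (trB (calN0 ψ₂))) := by
      have h := hGreenS (calD0 (trB (calN0 ψ₁))) 0
          (calN0 ψ₂ - calD0 (trB (calN0 ψ₂))) (hcalD0 _).1 Harm.zero_mem
          (by simp [(hcalD0 _).2.1]) (by simp [(hcalD0 _).2.2])
      simp only [map_sub, map_zero, LinearMap.zero_apply, LinearMap.sub_apply] at h
      linarith
    rw [h1, h2, h3]
  symm
  rw [ContinuousLinearMap.eq_adjoint_iff]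
  intro ψ₁ ψ₂
  rw [key, real_inner_comm, key, hdir_symm]
end

section
/- Fix an extension σ̂ ∈ H^{1/2}(∂Ω) of σ ∈ H^{1/2}(S) and let φ̂ = σ̂|_B. Then: (i) if η ∈ H^{1/2}_{00}(B) then D_0(η) ∈ H^{1/2}_{00}(S); (ii) if φ = φ̂ + η with η ∈ H^{1/2}(B) solves D(φ) = σ, then η ∈ H^{1/2}_{00}(B); (iii) the distribution σ − D(φ̂) belongs to H^{1/2}_{00}(S). -/
/-!
Kozlov–Maz'ya iteration as Landweber iteration (D. Maxwell).

Abstract setting: `V` plays the role of `H^1(Ω)`, `Tbd` of `H^{1/2}(∂Ω)` with restriction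
maps `rS : Tbd →ₗ TS = H^{1/2}(S)` and `rB : Tbd →ₗ TB = H^{1/2}(B)`, and `tr : V →ₗ Tbd`
is the trace map.  `H^{1/2}_{00}(S)` is realized as the set of elements of `H^{1/2}(S)`
admitting an extension in `H^{1/2}(∂Ω)` vanishing on `B`, and analogously for `B`.
`NS = H^{-1/2}(S)`, `dnS` is the weak normal derivative on `S`, `Harm` the harmonic
subspace, `SolF` the set of weak solutions of `−Δw = f` for the fixed source `f`.
For φ ∈ H^{1/2}(B), `𝒟(φ)` solves `−Δw = f, ∂ₙw|_S = τ, w|_B = φ` and `D(φ) = 𝒟(φ)|_S`;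
`𝒟₀, D₀` are defined identically with homogeneous data `f = 0, τ = 0`.

STATEMENT 8: Fix an extension σ̂ ∈ H^{1/2}(∂Ω) of σ ∈ H^{1/2}(S) and let φ̂ = σ̂|_B.  Then:
(i) if η ∈ H^{1/2}_{00}(B) then D₀(η) ∈ H^{1/2}_{00}(S);
(ii) if φ = φ̂ + η with η ∈ H^{1/2}(B) solves D(φ) = σ, then η ∈ H^{1/2}_{00}(B);
(iii) the distribution σ − D(φ̂) belongs to H^{1/2}_{00}(S).
-/
theorem mem_H00_of_KM_dirichlet
    {V : Type*} [AddCommGroup V] [Module ℝ V]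
    {Tbd TS TB : Type*} [AddCommGroup Tbd] [Module ℝ Tbd]
    [AddCommGroup TS] [Module ℝ TS] [AddCommGroup TB] [Module ℝ TB]
    {NS : Type*} [AddCommGroup NS] [Module ℝ NS]
    -- restriction maps from H^{1/2}(∂Ω) onto H^{1/2}(S) and H^{1/2}(B)
    (rS : Tbd →ₗ[ℝ] TS) (rB : Tbd →ₗ[ℝ] TB)
    -- the trace map H^1(Ω) → H^{1/2}(∂Ω)
    (tr : V →ₗ[ℝ] Tbd)
    -- normal derivative on S
    (dnS : V →ₗ[ℝ] NS)
    (Harm : Submodule ℝ V)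
    -- solutions of −Δw = f for the fixed right-hand side f
    (SolF : Set V)
    (hSolF_diff : ∀ u v : V, u ∈ SolF → v ∈ SolF → u - v ∈ Harm)
    -- the fixed boundary data
    (σ : TS) (τ : NS)
    -- 𝒟 : φ ↦ solution w of −Δw = f, ∂ₙw = τ on S, w = φ on B, and D(φ) = 𝒟(φ)|_S
    (calD : TB → V)
    (hcalD : ∀ φ, calD φ ∈ SolF ∧ dnS (calD φ) = τ ∧ rB (tr (calD φ)) = φ)
    (D : TB → TS)
    (hD : ∀ φ, D φ = rS (tr (calD φ)))
    -- 𝒟₀, D₀ : the same with homogeneous data f = 0, τ = 0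
    (calD0 : TB →ₗ[ℝ] V)
    (hcalD0 : ∀ φ, calD0 φ ∈ Harm ∧ dnS (calD0 φ) = 0 ∧ rB (tr (calD0 φ)) = φ)
    (D0 : TB →ₗ[ℝ] TS)
    (hD0 : ∀ φ, D0 φ = rS (tr (calD0 φ)))
    -- the extension σ̂ of σ and φ̂ = σ̂|_B
    (σhat : Tbd) (hσhat : rS σhat = σ) (φhat : TB) (hφhat : φhat = rB σhat) :
    -- (i)
    (∀ η : TB, (∃ Φ : Tbd, rB Φ = η ∧ rS Φ = 0) →
      ∃ Ψ : Tbd, rS Ψ = D0 η ∧ rB Ψ = 0) ∧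
    -- (ii)
    (∀ η : TB, D (φhat + η) = σ → ∃ Φ : Tbd, rB Φ = η ∧ rS Φ = 0) ∧
    -- (iii)
    (∃ Ψ : Tbd, rS Ψ = σ - D φhat ∧ rB Ψ = 0) := by
  refine ⟨?_, ?_, ?_⟩
  · rintro η ⟨Φ, hΦB, hΦS⟩
    refine ⟨tr (calD0 η) - Φ, ?_, ?_⟩
    · simp [map_sub, hΦS, hD0]
    · simp [map_sub, hΦB, (hcalD0 η).2.2]
  · intro η hη
    refine ⟨tr (calD (φhat + η)) - σhat, ?_, ?_⟩
    · rw [map_sub, (hcalD (φhat + η)).2.2, ← hφhat, add_sub_cancel_left]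
    · rw [map_sub, ← hD, hη, hσhat, sub_self]
  · refine ⟨σhat - tr (calD φhat), ?_, ?_⟩
    · rw [map_sub, hσhat, hD]
    · rw [map_sub, (hcalD φhat).2.2, hφhat, sub_self]
end
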